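/- arXiv:1403.0460 — 2 statements merged into one kernel-verified Lean document; each statement's English description precedes it below -/
import Mathlib

section
/- Fix integers n ≥ 1, c ≥ 1 and m ∈ {0, …, c}. Let (A₁, A₂; C₁, …, C_n; e) be a tuple satisfying condition (P1) and such that A_{2m} is invertible. Then the tuple satisfies condition (P3) if and only if the triple (B_m, E_m, e) satisfies condition (T2). -/
open Matrix

abbrev Mat (c : ℕ) := Matrix (Fin c) (Fin c) ℂ

noncomputable def cS (c : ℕ) (m : ℤ) : ℂ :=
  ((Real.cos (Real.pi * (m : ℝ) / ((c : ℝ) + 1)) : ℝ) : ℂ)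

noncomputable def sS (c : ℕ) (m : ℤ) : ℂ :=
  ((Real.sin (Real.pi * (m : ℝ) / ((c : ℝ) + 1)) : ℝ) : ℂ)

noncomputable def A1M (c : ℕ) (m : ℤ) (A1 A2 : Mat c) : Mat c :=
  cS c m • A1 - sS c m • A2

noncomputable def A2M (c : ℕ) (m : ℤ) (A1 A2 : Mat c) : Mat c :=
  sS c m • A1 + cS c m • A2

noncomputable def BM (c : ℕ) (m : ℤ) (A1 A2 : Mat c) : Mat c :=
  (A2M c m A1 A2)⁻¹ * A1M c m A1 A2

noncomputable def DM (n c : ℕ) (m : ℤ) (C : Fin n → Mat c) : Mat c :=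
  ∑ q : Fin n, (((n - 1).choose q.val : ℂ) * cS c m ^ (n - 1 - q.val) * sS c m ^ q.val) • C q

noncomputable def EM (n c : ℕ) (m : ℤ) (A1 A2 : Mat c) (C : Fin n → Mat c) : Mat c :=
  DM n c m C * A2M c m A1 A2

/-- Condition (P1). -/
def CondP1 (n c : ℕ) (A1 A2 : Mat c) (C : Fin n → Mat c) : Prop :=
  (∀ h : n = 1, A1 * C ⟨0, by omega⟩ * A2 = A2 * C ⟨0, by omega⟩ * A1) ∧
  ∀ q : ℕ, ∀ hq : q + 1 < n,
    A1 * C ⟨q, by omega⟩ = A2 * C ⟨q + 1, hq⟩ ∧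
    C ⟨q, by omega⟩ * A1 = C ⟨q + 1, hq⟩ * A2

/-- Condition (P2). -/
def CondP2 (c : ℕ) (A1 A2 : Mat c) : Prop :=
  ∃ ν : ℂ × ℂ, ν ≠ 0 ∧ (ν.1 • A1 + ν.2 • A2).det ≠ 0

/-- Condition (P3), with `C1`, `Cn` the first and last of the `C` matrices. -/
def CondP3 (n c : ℕ) (A1 A2 C1 Cn : Mat c) (e : Fin c → ℂ) : Prop :=
  ∀ l1 l2 m1 m2 : ℂ, (l1, l2) ≠ 0 → l1 ^ n * m1 + l2 ^ n * m2 = 0 →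
    ∀ v : Fin c → ℂ,
      (l2 • A1 + l1 • A2).mulVec v = 0 →
      (C1 * A2 + m1 • 1).mulVec v = 0 →
      (Cn * A1 + ((-1 : ℂ) ^ (n - 1) * m2) • 1).mulVec v = 0 →
      e ⬝ᵥ v = 0 → v = 0

/-- Membership in `P^n(c)`: conditions (P1), (P2), (P3). -/
def CondP (n c : ℕ) (hn : 0 < n) (A1 A2 : Mat c) (C : Fin n → Mat c) (e : Fin c → ℂ) : Prop :=
  CondP1 n c A1 A2 C ∧ CondP2 c A1 A2 ∧
    CondP3 n c A1 A2 (C ⟨0, hn⟩) (C ⟨n - 1, by omega⟩) e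

/-- Condition (T2). -/
def CondT2 (c : ℕ) (b1 b2 : Mat c) (e : Fin c → ℂ) : Prop :=
  ∀ z w : ℂ, ∀ v : Fin c → ℂ,
    (b1 + z • 1).mulVec v = 0 → (b2 + w • 1).mulVec v = 0 → e ⬝ᵥ v = 0 → v = 0

/-- ADHM data: conditions (T1) and (T2). -/
def ADHM (c : ℕ) (b1 b2 : Mat c) (e : Fin c → ℂ) : Prop :=
  b1 * b2 = b2 * b1 ∧ CondT2 c b1 b2 e

/-!
Write `c = c_m`, `s = s_m`. The rotation `z₂ = cλ₂ − sλ₁`, `z₁ = cλ₁ + sλ₂` turns the pencil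
`λ₂A₁ + λ₁A₂` into `z₂A_{1m} + z₁A_{2m}`; as `A_{2m}` is invertible, its kernel is that of
`B_m + (z₁/z₂)·1`, and is trivial when `z₂ = 0`. On such a kernel vector `v`, condition (P1) makes
`C₁A₂v, C₁A₁v = C₂A₂v, …, C_nA₁v` a projective geometric sequence `(−λ₁)ᵏ λ₂ⁿ⁻ᵏ y`, and the
binomial theorem collapses `E_m v` to `z₂ⁿ y`. So the eigenvalue equations of (P3) and of (T2)
both say that `y` is a multiple of `v`.
-/

open Finset

theorem exists_eq_pow_mul_pow_smul {K V : Type*} [Field K] [AddCommGroup V] [Module K V]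
    {a b : K} (hab : a ≠ 0 ∨ b ≠ 0) {n : ℕ} {x : ℕ → V}
    (hx : ∀ k < n, b • x (k + 1) = a • x k) :
    ∃ y, ∀ k ≤ n, x k = (a ^ k * b ^ (n - k)) • y := by
  rcases eq_or_ne b 0 with rfl | hb
  · have ha : a ≠ 0 := hab.resolve_right (not_not_intro rfl)
    have hzero : ∀ k < n, x k = 0 := fun k hk => by
      simpa [ha] using (hx k hk).symm
    refine ⟨(a ^ n)⁻¹ • x n, fun k hk => ?_⟩
    rcases hk.lt_or_eq with hk | rfl
    · rw [hzero k hk, zero_pow (by omega), mul_zero, zero_smul]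
    · rw [Nat.sub_self, pow_zero, mul_one, smul_smul, mul_inv_cancel₀ (pow_ne_zero _ ha),
        one_smul]
  · have hpow : ∀ k ≤ n, b ^ k • x k = a ^ k • x 0 := by
      intro k
      induction k with
      | zero => simp
      | succ k ih =>
        intro hk
        rw [pow_succ, mul_smul, hx k hk, smul_comm, ih (by omega), smul_smul, ← pow_succ']
    refine ⟨(b ^ n)⁻¹ • x 0, fun k hk => ?_⟩
    apply smul_right_injective V (pow_ne_zero k hb)
    have hsplit : b ^ n = b ^ (n - k) * b ^ k := by rw [← pow_add, Nat.sub_add_cancel hk]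
    dsimp only
    rw [hpow k hk, smul_smul, smul_smul, hsplit]
    congr 1
    field_simp

theorem exists_eq_smul_of_smul_eq_smul {K V : Type*} [Field K] [AddCommGroup V] [Module K V]
    {a b α β : K} {y v : V} (hab : a ≠ 0 ∨ b ≠ 0) (ha : a • y = α • v) (hb : b • y = β • v) :
    ∃ t : K, y = t • v := by
  rcases hab with ha0 | hb0
  · exact ⟨a⁻¹ * α, by rw [mul_smul, ← ha, inv_smul_smul₀ ha0]⟩
  · exact ⟨b⁻¹ * β, by rw [mul_smul, ← hb, inv_smul_smul₀ hb0]⟩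

theorem neg_pow_eq_neg_neg_one_pow_pred_mul {R : Type*} [CommRing R] {n : ℕ} (hn : 0 < n)
    (l : R) : (-l) ^ n = -((-1) ^ (n - 1) * l ^ n) := by
  obtain ⟨N, rfl⟩ : ∃ N, n = N + 1 := ⟨n - 1, by omega⟩
  rw [neg_pow, Nat.add_sub_cancel, pow_succ]
  ring

theorem sum_fin_choose_mul_pow_mul_pow {R : Type*} [CommSemiring R] {n : ℕ} (hn : 0 < n)
    (X Y : R) :
    ∑ q : Fin n, ((n - 1).choose q : R) * X ^ (n - 1 - q) * Y ^ (q : ℕ) = (X + Y) ^ (n - 1) := by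
  obtain ⟨N, rfl⟩ : ∃ N, n = N + 1 := ⟨n - 1, by omega⟩
  rw [Nat.add_sub_cancel, add_comm X Y, add_pow,
    Fin.sum_univ_eq_sum_range (fun q => (N.choose q : R) * X ^ (N - q) * Y ^ q)]
  exact sum_congr rfl fun q _ => by ring

section Rotation

variable {c : ℕ} (m : ℤ) {A1 A2 : Mat c}

theorem cS_sq_add_sS_sq : cS c m ^ 2 + sS c m ^ 2 = 1 := by
  unfold cS sS
  exact_mod_cast congrArg Complex.ofReal (Real.cos_sq_add_sin_sq _)

theorem smul_A1M_add_smul_A2M (l1 l2 : ℂ) :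
    (cS c m * l2 - sS c m * l1) • A1M c m A1 A2 + (cS c m * l1 + sS c m * l2) • A2M c m A1 A2
      = l2 • A1 + l1 • A2 := by
  have hcs := cS_sq_add_sS_sq (c := c) m
  unfold A1M A2M
  match_scalars
  · linear_combination l2 * hcs
  · linear_combination l1 * hcs

theorem mulVec_BM_add_smul_eq_zero_iff (hinv : IsUnit (A2M c m A1 A2)) (z : ℂ)
    (v : Fin c → ℂ) :
    (BM c m A1 A2 + z • 1) *ᵥ v = 0 ↔ (A1M c m A1 A2 + z • A2M c m A1 A2) *ᵥ v = 0 := by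
  have := hinv.invertible
  have hfac : A2M c m A1 A2 * (BM c m A1 A2 + z • 1) = A1M c m A1 A2 + z • A2M c m A1 A2 := by
    rw [mul_add, BM, Matrix.mul_inv_cancel_left_of_invertible, mul_smul_comm, mul_one]
  rw [← hfac, ← Matrix.mulVec_mulVec,
    (Matrix.mulVec_injective_iff_isUnit.mpr hinv).eq_iff' (Matrix.mulVec_zero _)]

end Rotation

section Chain

variable {n c : ℕ} {A1 A2 : Mat c} {C : Fin n → Mat c} {v : Fin c → ℂ}

theorem exists_mulVec_eq_of_condP1 (hn : 0 < n) (hP1 : CondP1 n c A1 A2 C) {l1 l2 : ℂ}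
    (hl : (l1, l2) ≠ 0) (h1 : (l2 • A1 + l1 • A2) *ᵥ v = 0) :
    ∃ y, (∀ q : Fin n, (C q * A2) *ᵥ v = ((-l1) ^ (q : ℕ) * l2 ^ (n - q)) • y) ∧
      ∀ q : Fin n, (C q * A1) *ᵥ v = ((-l1) ^ ((q : ℕ) + 1) * l2 ^ (n - (q + 1))) • y := by
  -- `x` lists `C₁A₂v, …, C_nA₂v, C_nA₁v`; (P1) says `x (q + 1) = C_q A₁ v` for every `q`
  let x : ℕ → Fin c → ℂ := fun k =>
    if h : k < n then (C ⟨k, h⟩ * A2) *ᵥ v else (C ⟨n - 1, by omega⟩ * A1) *ᵥ v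
  have hx : ∀ q : Fin n, x q = (C q * A2) *ᵥ v := fun q => dif_pos q.isLt
  have hx_succ : ∀ q : Fin n, x (q + 1) = (C q * A1) *ᵥ v := by
    rintro ⟨q, hq⟩
    by_cases h : q + 1 < n
    · simp only [x, dif_pos h, (hP1.2 q h).2]
    · obtain rfl : q = n - 1 := by omega
      simp only [x, dif_neg h]
  have hrec : ∀ k < n, l2 • x (k + 1) = (-l1) • x k := by
    intro k hk
    have hC := congrArg (C ⟨k, hk⟩ *ᵥ ·) h1
    rw [Matrix.mulVec_mulVec, mul_add, mul_smul_comm, mul_smul_comm, Matrix.add_mulVec,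
      Matrix.smul_mulVec, Matrix.smul_mulVec, Matrix.mulVec_zero] at hC
    rw [hx_succ ⟨k, hk⟩, hx ⟨k, hk⟩, neg_smul, eq_neg_iff_add_eq_zero, hC]
  have hab : -l1 ≠ 0 ∨ l2 ≠ 0 := by
    rw [neg_ne_zero, ← not_and_or]
    exact fun h => hl (Prod.mk_eq_zero.mpr h)
  obtain ⟨y, hy⟩ := exists_eq_pow_mul_pow_smul hab hrec
  exact ⟨y, fun q => (hx q).symm.trans (hy q q.isLt.le),
    fun q => (hx_succ q).symm.trans (hy _ q.isLt)⟩

theorem EM_mulVec (m : ℤ) :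
    EM n c m A1 A2 C *ᵥ v = ∑ q : Fin n,
      (((n - 1).choose q : ℂ) * cS c m ^ (n - 1 - q) * sS c m ^ (q : ℕ)) •
        (sS c m • (C q * A1) *ᵥ v + cS c m • (C q * A2) *ᵥ v) := by
  rw [EM, DM, sum_mul, Matrix.sum_mulVec]
  refine sum_congr rfl fun q _ => ?_
  rw [smul_mul_assoc, Matrix.smul_mulVec, A2M, mul_add, mul_smul_comm, mul_smul_comm,
    Matrix.add_mulVec, Matrix.smul_mulVec, Matrix.smul_mulVec]

theorem EM_mulVec_eq_pow_smul (hn : 0 < n) (m : ℤ) {a b : ℂ} {y : Fin c → ℂ}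
    (hA2 : ∀ q : Fin n, (C q * A2) *ᵥ v = (a ^ (q : ℕ) * b ^ (n - q)) • y)
    (hA1 : ∀ q : Fin n, (C q * A1) *ᵥ v = (a ^ ((q : ℕ) + 1) * b ^ (n - (q + 1))) • y) :
    EM n c m A1 A2 C *ᵥ v = (cS c m * b + sS c m * a) ^ n • y := by
  have hterm : ∀ q : Fin n,
      (((n - 1).choose q : ℂ) * cS c m ^ (n - 1 - q) * sS c m ^ (q : ℕ)) •
        (sS c m • (C q * A1) *ᵥ v + cS c m • (C q * A2) *ᵥ v)
      = (((n - 1).choose q : ℂ) * (cS c m * b) ^ (n - 1 - q) * (sS c m * a) ^ (q : ℕ)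
          * (cS c m * b + sS c m * a)) • y := by
    intro q
    have h1 : n - (q + 1) = n - 1 - q := by omega
    have h2 : n - q = n - 1 - q + 1 := by omega
    rw [hA1, hA2, h1, h2, smul_smul, smul_smul, ← add_smul, smul_smul]
    congr 1
    ring
  rw [EM_mulVec, sum_congr rfl fun q _ => hterm q, ← sum_smul, ← sum_mul,
    sum_fin_choose_mul_pow_mul_pow hn, ← pow_succ, Nat.sub_add_cancel hn]

end Chain

section Equations

variable {n c : ℕ} {m : ℤ} {A1 A2 : Mat c} {C : Fin n → Mat c} {v : Fin c → ℂ}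

theorem exists_condP3_eqns_of_condT2_eqns (hn : 0 < n) (hP1 : CondP1 n c A1 A2 C)
    (hinv : IsUnit (A2M c m A1 A2)) {z w : ℂ} (hB : (BM c m A1 A2 + z • 1) *ᵥ v = 0)
    (hE : (EM n c m A1 A2 C + w • 1) *ᵥ v = 0) :
    ∃ l1 l2 μ1 μ2 : ℂ, (l1, l2) ≠ 0 ∧ l1 ^ n * μ1 + l2 ^ n * μ2 = 0 ∧
      (l2 • A1 + l1 • A2) *ᵥ v = 0 ∧ (C ⟨0, hn⟩ * A2 + μ1 • 1) *ᵥ v = 0 ∧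
      (C ⟨n - 1, by omega⟩ * A1 + ((-1 : ℂ) ^ (n - 1) * μ2) • 1) *ᵥ v = 0 := by
  have hcs := cS_sq_add_sS_sq (c := c) m
  -- the point `[λ₁ : λ₂]` rotated into `[z : 1]`
  set l1 := cS c m * z - sS c m
  set l2 := cS c m + sS c m * z
  have hz2 : cS c m * l2 - sS c m * l1 = 1 := by linear_combination hcs
  have hz1 : cS c m * l1 + sS c m * l2 = z := by linear_combination z * hcs
  have hl : (l1, l2) ≠ 0 := fun h => by
    rw [Prod.mk_eq_zero] at h
    simp [h.1, h.2] at hz2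
  have h1 : (l2 • A1 + l1 • A2) *ᵥ v = 0 := by
    rw [← smul_A1M_add_smul_A2M m, hz2, hz1, one_smul, ← mulVec_BM_add_smul_eq_zero_iff m hinv]
    exact hB
  obtain ⟨y, hA2, hA1⟩ := exists_mulVec_eq_of_condP1 hn hP1 hl h1
  have hy : y = -(w • v) := by
    have hEy := EM_mulVec_eq_pow_smul hn m hA2 hA1
    rw [show cS c m * l2 + sS c m * -l1 = 1 by linear_combination hz2, one_pow, one_smul]
      at hEy
    rw [Matrix.add_mulVec, hEy, Matrix.smul_mulVec, Matrix.one_mulVec] at hE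
    exact eq_neg_of_add_eq_zero_left hE
  refine ⟨l1, l2, l2 ^ n * w, -(l1 ^ n * w), hl, by ring, h1, ?_, ?_⟩
  · rw [Matrix.add_mulVec, hA2, hy, Matrix.smul_mulVec, Matrix.one_mulVec]
    module
  · rw [Matrix.add_mulVec, hA1, Matrix.smul_mulVec, Matrix.one_mulVec, hy]
    simp only [Nat.sub_add_cancel hn, Nat.sub_self, pow_zero, mul_one]
    rw [neg_pow_eq_neg_neg_one_pow_pred_mul hn]
    module

theorem exists_condT2_eqns_of_condP3_eqns (hn : 0 < n) (hP1 : CondP1 n c A1 A2 C)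
    (hinv : IsUnit (A2M c m A1 A2)) {l1 l2 μ1 μ2 : ℂ} (hl : (l1, l2) ≠ 0)
    (h1 : (l2 • A1 + l1 • A2) *ᵥ v = 0) (h2 : (C ⟨0, hn⟩ * A2 + μ1 • 1) *ᵥ v = 0)
    (h3 : (C ⟨n - 1, by omega⟩ * A1 + ((-1 : ℂ) ^ (n - 1) * μ2) • 1) *ᵥ v = 0) :
    ∃ z w : ℂ, (BM c m A1 A2 + z • 1) *ᵥ v = 0 ∧ (EM n c m A1 A2 C + w • 1) *ᵥ v = 0 := by
  have hcs := cS_sq_add_sS_sq (c := c) m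
  have hrot := smul_A1M_add_smul_A2M m l1 l2 (A1 := A1) (A2 := A2)
  set z1 := cS c m * l1 + sS c m * l2 with hz1
  set z2 := cS c m * l2 - sS c m * l1 with hz2
  by_cases hz2_zero : z2 = 0
  · have hz1_ne : z1 ≠ 0 := by
      intro hz1_zero
      refine hl (Prod.mk_eq_zero.mpr ⟨?_, ?_⟩)
      · linear_combination
          cS c m * hz1_zero - sS c m * hz2_zero - l1 * hcs - cS c m * hz1 + sS c m * hz2
      · linear_combination
          sS c m * hz1_zero + cS c m * hz2_zero - l2 * hcs - sS c m * hz1 - cS c m * hz2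
    rw [hz2_zero, zero_smul, zero_add] at hrot
    have hA2M : z1 • A2M c m A1 A2 *ᵥ v = 0 := by
      rw [← Matrix.smul_mulVec, hrot, h1]
    have hv : v = 0 := (Matrix.mulVec_injective_iff_isUnit.mpr hinv)
      (((smul_eq_zero.mp hA2M).resolve_left hz1_ne).trans (Matrix.mulVec_zero _).symm)
    exact ⟨0, 0, by simp [hv], by simp [hv]⟩
  obtain ⟨y, hA2, hA1⟩ := exists_mulVec_eq_of_condP1 hn hP1 hl h1
  obtain ⟨t, rfl⟩ : ∃ t : ℂ, y = t • v := by
    refine exists_eq_smul_of_smul_eq_smul (a := l2 ^ n) (b := (-l1) ^ n)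
      (α := -μ1) (β := -((-1) ^ (n - 1) * μ2)) ?_ ?_ ?_
    · rw [← not_and_or]
      exact fun h => hl (Prod.mk_eq_zero.mpr
        ⟨by simpa using (pow_eq_zero_iff hn.ne').mp h.2, (pow_eq_zero_iff hn.ne').mp h.1⟩)
    · rw [Matrix.add_mulVec, hA2, Matrix.smul_mulVec, Matrix.one_mulVec] at h2
      simpa using eq_neg_of_add_eq_zero_left h2
    · rw [Matrix.add_mulVec, hA1, Matrix.smul_mulVec, Matrix.one_mulVec] at h3
      simpa [Nat.sub_add_cancel hn] using eq_neg_of_add_eq_zero_left h3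
  refine ⟨z1 / z2, -(z2 ^ n * t), ?_, ?_⟩
  · have hpencil : A1M c m A1 A2 + (z1 / z2) • A2M c m A1 A2 = z2⁻¹ • (l2 • A1 + l1 • A2) := by
      rw [← hrot, smul_add, smul_smul, smul_smul, inv_mul_cancel₀ hz2_zero, one_smul,
        div_eq_inv_mul]
    rw [mulVec_BM_add_smul_eq_zero_iff m hinv, hpencil, Matrix.smul_mulVec, h1, smul_zero]
  · rw [Matrix.add_mulVec, EM_mulVec_eq_pow_smul hn m hA2 hA1, Matrix.smul_mulVec,
      Matrix.one_mulVec, show cS c m * l2 + sS c m * -l1 = z2 by ring]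
    module

end Equations

/-- under (P1) and invertibility of A_{2m}, condition (P3) holds if and
only if the triple (B_m, E_m, e) satisfies condition (T2). -/
theorem stmt8 (n c : ℕ) (hn : 0 < n) (m : ℕ)
    (A1 A2 : Mat c) (C : Fin n → Mat c) (e : Fin c → ℂ)
    (hP1 : CondP1 n c A1 A2 C) (hinv : IsUnit (A2M c m A1 A2)) :
    CondP3 n c A1 A2 (C ⟨0, hn⟩) (C ⟨n - 1, by omega⟩) e ↔
      CondT2 c (BM c m A1 A2) (EM n c m A1 A2 C) e := by
  constructor
  · intro hP3 z w v hB hE hev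
    obtain ⟨l1, l2, μ1, μ2, hl, hμ, h1, h2, h3⟩ :=
      exists_condP3_eqns_of_condT2_eqns hn hP1 hinv hB hE
    exact hP3 l1 l2 μ1 μ2 hl hμ v h1 h2 h3 hev
  · intro hT2 l1 l2 μ1 μ2 hl _ v h1 h2 h3 hev
    obtain ⟨z, w, hB, hE⟩ := exists_condT2_eqns_of_condP3_eqns hn hP1 hinv hl h1 h2 h3
    exact hT2 z w v hB hE hev
end

section
/- Fix integers n ≥ 1, c ≥ 1 and integers m, l ∈ {0, …, c}. Let (A₁, A₂; C₁, …, C_n; e) be a tuple satisfying condition (P1) such that both A_{2m} and A_{2l} are invertible. Then E_l = (c_{m−l}·1 − s_{m−l} B_m)^n E_m. -/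
/-!
Write `X = c_{m-l} 1 - s_{m-l} B_m`. The addition formulas for sine and cosine give
`A_{2m} X = A_{2l}`, so an identity `Y = X Z` follows from `A_{2m} Y = A_{2l} Z` once `A_{2m}`
is invertible. Pascal's rule splits `D_t` for `C₁, …, C_{n+1}` as `c_t D_t' + s_t D_t''`, where
`D_t'`, `D_t''` are built from `C₁, …, C_n` and `C₂, …, C_{n+1}`; this gives an induction
on `n`. Both the case `n = 1` and the inductive step reduce to a symmetry in `t, u` that
(P1) provides: `A_{2t} P A_{2u}` is symmetric when `A₁ P A₂ = A₂ P A₁`, and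
`A_{2t} (c_u P + s_u Q)` is symmetric when `A₁ P = A₂ Q`.
-/

open Matrix

open Finset

theorem Finset.sum_range_choose_mul_pow_smul_succ {R M : Type*} [CommSemiring R]
    [AddCommMonoid M] [Module R M] (x y : R) (g : ℕ → M) (k : ℕ) :
    ∑ i ∈ range (k + 2), ((k + 1).choose i * x ^ (k + 1 - i) * y ^ i : R) • g i =
      x • ∑ i ∈ range (k + 1), (k.choose i * x ^ (k - i) * y ^ i : R) • g i +
        y • ∑ i ∈ range (k + 1), (k.choose i * x ^ (k - i) * y ^ i : R) • g (i + 1) := by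
  have pascal := sum_choose_succ_nsmul (fun i j => (x ^ j * y ^ i) • g i) k
  simp only [← Nat.cast_smul_eq_nsmul R, smul_smul, ← mul_assoc] at pascal
  rw [pascal, smul_sum, smul_sum]
  congr 1 <;> refine sum_congr rfl fun i hi => ?_ <;> rw [smul_smul] <;> congr 1
  · rw [Nat.sub_add_comm (Nat.lt_succ_iff.mp (mem_range.mp hi))]
    ring
  · ring

theorem sS_sub (c : ℕ) (x y : ℤ) : sS c (x - y) = sS c x * cS c y - cS c x * sS c y := by
  simp only [sS, cS, Int.cast_sub, mul_sub, sub_div, Real.sin_sub]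
  push_cast
  ring

theorem cS_sub (c : ℕ) (x y : ℤ) : cS c (x - y) = cS c x * cS c y + sS c x * sS c y := by
  simp only [sS, cS, Int.cast_sub, mul_sub, sub_div, Real.cos_sub]
  push_cast
  ring

theorem DM_one (c : ℕ) (t : ℤ) (C : Fin 1 → Mat c) : DM 1 c t C = C 0 := by
  simp [DM]

theorem DM_eq_sum_range {n c : ℕ} (t : ℤ) (C : Fin n → Mat c) {g : ℕ → Mat c}
    (hg : ∀ q : Fin n, g q = C q) :
    DM n c t C =
      ∑ q ∈ range n, ((n - 1).choose q * cS c t ^ (n - 1 - q) * sS c t ^ q) • g q := by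
  rw [DM, ← Fin.sum_univ_eq_sum_range]
  exact sum_congr rfl fun q _ => by rw [hg]

theorem DM_succ_succ (k c : ℕ) (t : ℤ) (C : Fin (k + 2) → Mat c) :
    DM (k + 2) c t C =
      cS c t • DM (k + 1) c t (fun q => C q.castSucc) +
        sS c t • DM (k + 1) c t (fun q => C q.succ) := by
  let g : ℕ → Mat c := fun q => if h : q < k + 2 then C ⟨q, h⟩ else 0
  rw [DM_eq_sum_range t C (g := g) fun q => dif_pos q.isLt,
    DM_eq_sum_range t (fun q => C q.castSucc) (g := g) fun q => dif_pos (Nat.lt_succ_of_lt q.isLt),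
    DM_eq_sum_range t (fun q => C q.succ) (g := fun q => g (q + 1))
      fun q => dif_pos (Nat.succ_lt_succ q.isLt)]
  exact sum_range_choose_mul_pow_smul_succ _ _ g k

theorem EM_succ_succ (k c : ℕ) (t : ℤ) (A1 A2 : Mat c) (C : Fin (k + 2) → Mat c) :
    EM (k + 2) c t A1 A2 C =
      cS c t • EM (k + 1) c t A1 A2 (fun q => C q.castSucc) +
        sS c t • EM (k + 1) c t A1 A2 (fun q => C q.succ) := by
  simp only [EM, DM_succ_succ, add_mul, smul_mul_assoc]

theorem A1_mul_DM_castSucc {k c : ℕ} (t : ℤ) {A1 A2 : Mat c} {C : Fin (k + 2) → Mat c}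
    (hchain : ∀ q : Fin (k + 1), A1 * C q.castSucc = A2 * C q.succ) :
    A1 * DM (k + 1) c t (fun q => C q.castSucc) = A2 * DM (k + 1) c t (fun q => C q.succ) := by
  simp only [DM, mul_sum, mul_smul_comm, hchain]

theorem CondP1.mul_castSucc {k c : ℕ} {A1 A2 : Mat c} {C : Fin (k + 1) → Mat c}
    (h : CondP1 (k + 1) c A1 A2 C) (q : Fin k) : A1 * C q.castSucc = A2 * C q.succ :=
  (h.2 q (by omega)).1

theorem CondP1.mul_mul_comm {n c : ℕ} {A1 A2 : Mat c} {C : Fin n → Mat c}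
    (h : CondP1 n c A1 A2 C) (q : Fin n) : A1 * C q * A2 = A2 * C q * A1 := by
  obtain ⟨q, hq⟩ := q
  by_cases hn : n = 1
  · subst hn
    obtain rfl : q = 0 := by omega
    exact h.1 rfl
  by_cases hlast : q + 1 < n
  · obtain ⟨hleft, hright⟩ := h.2 q hlast
    rw [hleft, mul_assoc, ← hright, mul_assoc]
  · obtain ⟨p, rfl⟩ : ∃ p, q = p + 1 := ⟨q - 1, by omega⟩
    obtain ⟨hleft, hright⟩ := h.2 p hq
    rw [mul_assoc, ← hright, ← mul_assoc, hleft]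

section Rotation

variable {c : ℕ} {A1 A2 : Mat c}

theorem A2M_mul_BM {m : ℤ} (hum : IsUnit (A2M c m A1 A2)) :
    A2M c m A1 A2 * BM c m A1 A2 = A1M c m A1 A2 := by
  rw [BM, ← mul_assoc, mul_nonsing_inv _ ((isUnit_iff_isUnit_det _).mp hum), one_mul]

theorem A2M_mul_rotation {m : ℤ} (l : ℤ) (hum : IsUnit (A2M c m A1 A2)) :
    A2M c m A1 A2 * (cS c (m - l) • (1 : Mat c) - sS c (m - l) • BM c m A1 A2) =
      A2M c l A1 A2 := by
  rw [mul_sub, mul_smul_comm, mul_smul_comm, mul_one, A2M_mul_BM hum]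
  simp only [A2M, A1M, smul_sub, smul_add, smul_smul]
  have hs := sS_sub c m (m - l)
  have hc := cS_sub c m (m - l)
  rw [sub_sub_cancel] at hs hc
  match_scalars
  · linear_combination -hs
  · linear_combination -hc

theorem eq_rotation_mul_of_A2M_mul_eq {m l : ℤ} (hum : IsUnit (A2M c m A1 A2)) {Y Z : Mat c}
    (h : A2M c m A1 A2 * Y = A2M c l A1 A2 * Z) :
    Y = (cS c (m - l) • (1 : Mat c) - sS c (m - l) • BM c m A1 A2) * Z :=
  hum.mul_left_cancel (by rw [← mul_assoc, A2M_mul_rotation l hum, h])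

theorem A2M_mul_mul_A2M_comm {P : Mat c} (h : A1 * P * A2 = A2 * P * A1) (t u : ℤ) :
    A2M c t A1 A2 * P * A2M c u A1 A2 = A2M c u A1 A2 * P * A2M c t A1 A2 := by
  simp only [A2M, add_mul, mul_add, smul_mul_assoc, mul_smul_comm, h]
  module

theorem A2M_mul_smul_add_smul_comm {P Q : Mat c} (h : A1 * P = A2 * Q) (t u : ℤ) :
    A2M c t A1 A2 * (cS c u • P + sS c u • Q) =
      A2M c u A1 A2 * (cS c t • P + sS c t • Q) := by
  simp only [A2M, add_mul, mul_add, smul_mul_assoc, mul_smul_comm, h]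
  module

end Rotation

theorem EM_eq_rotation_pow_mul_EM {c : ℕ} {m : ℤ} (l : ℤ) {A1 A2 : Mat c}
    (hum : IsUnit (A2M c m A1 A2)) (k : ℕ) (C : Fin (k + 1) → Mat c)
    (hcomm : ∀ q, A1 * C q * A2 = A2 * C q * A1)
    (hchain : ∀ q : Fin k, A1 * C q.castSucc = A2 * C q.succ) :
    EM (k + 1) c l A1 A2 C =
      (cS c (m - l) • (1 : Mat c) - sS c (m - l) • BM c m A1 A2) ^ (k + 1) *
        EM (k + 1) c m A1 A2 C := by
  induction k with
  | zero =>
    rw [pow_one, EM, EM, DM_one, DM_one]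
    refine eq_rotation_mul_of_A2M_mul_eq hum ?_
    rw [← mul_assoc, ← mul_assoc, A2M_mul_mul_A2M_comm (hcomm 0)]
  | succ k ih =>
    set X := cS c (m - l) • (1 : Mat c) - sS c (m - l) • BM c m A1 A2
    set P := DM (k + 1) c m (fun q => C q.castSucc)
    set Q := DM (k + 1) c m (fun q => C q.succ)
    have hstep : (cS c l • P + sS c l • Q) * A2M c m A1 A2 = X * EM (k + 2) c m A1 A2 C := by
      refine eq_rotation_mul_of_A2M_mul_eq hum ?_
      rw [EM, DM_succ_succ, ← mul_assoc, ← mul_assoc,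
        A2M_mul_smul_add_smul_comm (A1_mul_DM_castSucc m hchain)]
    calc EM (k + 2) c l A1 A2 C
        = cS c l • EM (k + 1) c l A1 A2 (fun q => C q.castSucc) +
            sS c l • EM (k + 1) c l A1 A2 (fun q => C q.succ) := EM_succ_succ k c l A1 A2 C
      _ = X ^ (k + 1) * ((cS c l • P + sS c l • Q) * A2M c m A1 A2) := by
        rw [ih _ (fun q => hcomm _) (fun q => hchain q.castSucc),
          ih _ (fun q => hcomm _) (fun q => hchain q.succ)]
        simp only [EM, add_mul, mul_add, smul_mul_assoc, mul_smul_comm, P, Q]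
      _ = X ^ (k + 2) * EM (k + 2) c m A1 A2 C := by
        rw [hstep, ← mul_assoc, ← pow_succ]

theorem stmt11_general (n c : ℕ) (hn : 0 < n) (m l : ℕ)
    (A1 A2 : Mat c) (C : Fin n → Mat c)
    (hP1 : CondP1 n c A1 A2 C)
    (hum : IsUnit (A2M c m A1 A2)) :
    EM n c l A1 A2 C =
      (cS c ((m : ℤ) - (l : ℤ)) • (1 : Mat c) -
        sS c ((m : ℤ) - (l : ℤ)) • BM c m A1 A2) ^ n * EM n c m A1 A2 C := by
  obtain ⟨k, rfl⟩ : ∃ k, n = k + 1 := ⟨n - 1, by omega⟩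
  exact EM_eq_rotation_pow_mul_EM l hum k C hP1.mul_mul_comm hP1.mul_castSucc

/-- under (P1), if A_{2m} and A_{2l} are invertible then
E_l = (c_{m−l}·1 − s_{m−l}B_m)^n E_m. -/
theorem stmt11 (n c : ℕ) (hn : 0 < n) (hc : 0 < c) (m l : ℕ) (hm : m ≤ c) (hl : l ≤ c)
    (A1 A2 : Mat c) (C : Fin n → Mat c) (e : Fin c → ℂ)
    (hP1 : CondP1 n c A1 A2 C)
    (hum : IsUnit (A2M c m A1 A2)) (hul : IsUnit (A2M c l A1 A2)) :
    EM n c l A1 A2 C =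
      (cS c ((m : ℤ) - (l : ℤ)) • (1 : Mat c) -
        sS c ((m : ℤ) - (l : ℤ)) • BM c m A1 A2) ^ n * EM n c m A1 A2 C :=
  stmt11_general n c hn m l A1 A2 C hP1 hum
end
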